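/- Let r and k be positive integers and let m be a positive integer such that every finite nonempty simple graph of r-splitter rank k contains a nonempty induced subgraph with at most m vertices and r-splitter rank k. Then every finite simple graph G with rk_r(G) = k+1 contains an induced subgraph H with at most r·m² + r·m + 1 vertices such that rk_r(H) = k+1. -/

import Mathlib

open Classical

/-- The closed `r`-neighborhood of `c` inside the induced subgraph `G[A]`:
all vertices of `A` joined to `c` by a walk of length at most `r` staying in `A`. -/
noncomputable def ball {V : Type*} (G : SimpleGraph V) (r : ℕ) (A : Finset V) (c : V) :
    Finset V :=
  A.filter (fun v => ∃ p : G.Walk c v, p.length ≤ r ∧ ∀ x ∈ p.support, x ∈ A)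

/-- The `r`-splitter rank of the induced subgraph `G[A]` (with `rank ∅ = 0`). -/
noncomputable def splitterRank {V : Type*} [DecidableEq V] (G : SimpleGraph V) (r : ℕ)
    (A : Finset V) : ℕ :=
  if _ : A.Nonempty then
    1 + A.attach.sup (fun c =>
      (ball G r A c.1).attach.inf'
        (Finset.attach_nonempty_iff.2 ⟨c.1, Finset.mem_filter.2 ⟨c.2,
          SimpleGraph.Walk.nil, by simp, by simp [c.2]⟩⟩)
        (fun s => splitterRank G r ((ball G r A c.1).erase s.1)))
  else 0
termination_by A.card
decreasing_by
  exact lt_of_lt_of_le (Finset.card_erase_lt_of_mem s.2)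
    (Finset.card_le_card (Finset.filter_subset _ _))

/-
Choose a vertex `c` at which the maximum in the definition of `rk_r(G) = k + 1` is attained,
so that `rk_r(B - s) ≥ k` for every `s` in the ball `B = N_r[c]`. Since the rank drops by at most
one when a vertex is deleted, every set of rank at least `k` contains one of rank exactly `k`,
and by hypothesis one of those with at most `m` vertices. Take such a set `D ⊆ B - c` and, for each
`s ∈ D`, such a set `E_s ⊆ B - s`. Let `H` consist of `c` together with a path of length at most
`r` from `c` to each vertex of `K = D ∪ ⋃ E_s`. The ball of radius `r` around `c` in `H` contains
`K`, so deleting any vertex `s` from it leaves either `D` (if `s ∉ D`) or `E_s` intact, and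
monotonicity of the rank gives `rk_r(H) ≥ k + 1`; also `|H| ≤ 1 + r (m + m²)` and
`rk_r(H) ≤ rk_r(G)`.
-/

open Finset

lemma Finset.exists_erase_subset_erase {α : Type*} [DecidableEq α] {X Y : Finset α}
    (hX : X.Nonempty) (hXY : X ⊆ Y) (a : α) : ∃ b ∈ X, X.erase b ⊆ Y.erase a := by
  by_cases ha : a ∈ X
  · exact ⟨a, ha, erase_subset_erase a hXY⟩
  · obtain ⟨b, hb⟩ := hX
    exact ⟨b, hb, (erase_subset b X).trans (subset_erase.2 ⟨hXY, ha⟩)⟩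

lemma card_insert_biUnion_union_biUnion_le {α : Type*} [DecidableEq α] (c : α) {D : Finset α}
    {E P : α → Finset α} {m r : ℕ} (hD : D.card ≤ m) (hE : ∀ a ∈ D, (E a).card ≤ m)
    (hP : ∀ a ∈ D ∪ D.biUnion E, (P a).card ≤ r) :
    (insert c ((D ∪ D.biUnion E).biUnion P)).card ≤ r * m ^ 2 + r * m + 1 := by
  have hK : (D ∪ D.biUnion E).card ≤ m + m * m :=
    (card_union_le _ _).trans (add_le_add hD
      ((card_biUnion_le_card_mul _ _ _ hE).trans (Nat.mul_le_mul_right m hD)))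
  calc (insert c ((D ∪ D.biUnion E).biUnion P)).card
      ≤ (D ∪ D.biUnion E).card * r + 1 :=
        (card_insert_le _ _).trans (Nat.add_le_add_right (card_biUnion_le_card_mul _ _ _ hP) 1)
    _ ≤ (m + m * m) * r + 1 := Nat.add_le_add_right (Nat.mul_le_mul_right r hK) 1
    _ = r * m ^ 2 + r * m + 1 := by ring

section SplitterRank

variable {V : Type*} {G : SimpleGraph V} {r : ℕ} {A B : Finset V} {c : V}

lemma ball_subset : ball G r A c ⊆ A := filter_subset _ _

lemma mem_ball_of_walk {x : V} (p : G.Walk c x) (hp : p.length ≤ r)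
    (hA : ∀ y ∈ p.support, y ∈ A) : x ∈ ball G r A c :=
  mem_filter.2 ⟨hA x p.end_mem_support, p, hp, hA⟩

lemma mem_ball_self (hc : c ∈ A) : c ∈ ball G r A c :=
  mem_ball_of_walk .nil (Nat.zero_le r) (by simpa)

lemma ball_mono (h : A ⊆ B) : ball G r A c ⊆ ball G r B c := fun _ hx ↦ by
  obtain ⟨-, p, hp, hA⟩ := mem_filter.1 hx
  exact mem_ball_of_walk p hp fun y hy ↦ h (hA y hy)

-- `P` is the vertex set of a walk of length at most `r` from `c` to `x`, with `c` removed.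
lemma exists_card_le_forall_mem_ball {x : V} (hx : x ∈ ball G r A c) :
    ∃ P ⊆ A, P.card ≤ r ∧ ∀ H : Finset V, c ∈ H → P ⊆ H → x ∈ ball G r H c := by
  obtain ⟨-, p, hp, hpA⟩ := mem_filter.1 hx
  refine ⟨p.support.toFinset.erase c,
    fun y hy ↦ hpA y (List.mem_toFinset.1 (mem_of_mem_erase hy)), ?_,
    fun H hc hP ↦ mem_ball_of_walk p hp fun y hy ↦ ?_⟩
  · have := p.support.toFinset_card_le
    rw [SimpleGraph.Walk.length_support] at this
    rw [card_erase_of_mem (by simp)]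
    omega
  · by_cases hyc : y = c
    · exact hyc ▸ hc
    · exact hP (mem_erase.2 ⟨hyc, List.mem_toFinset.2 hy⟩)

variable [DecidableEq V]

lemma splitterRank_empty : splitterRank G r ∅ = 0 := by
  rw [splitterRank]; simp

lemma splitterRank_le_add_one_iff {t : ℕ} :
    splitterRank G r A ≤ t + 1 ↔
      ∀ c ∈ A, ∃ s ∈ ball G r A c, splitterRank G r ((ball G r A c).erase s) ≤ t := by
  rw [splitterRank]
  split_ifs with hA
  · simp [Finset.sup_le_iff, Finset.inf'_le_iff, add_comm 1]
  · simp [not_nonempty_iff_eq_empty.1 hA]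

lemma add_one_le_splitterRank_iff {t : ℕ} :
    t + 1 ≤ splitterRank G r A ↔
      ∃ c ∈ A, ∀ s ∈ ball G r A c, t ≤ splitterRank G r ((ball G r A c).erase s) := by
  rw [splitterRank]
  split_ifs with hA
  · rw [← sup'_eq_sup (attach_nonempty_iff.2 hA), add_comm 1, Nat.add_le_add_iff_right]
    simp [le_sup'_iff, le_inf'_iff]
  · simp [not_nonempty_iff_eq_empty.1 hA]

theorem splitterRank_mono {A B : Finset V} (h : A ⊆ B) :
    splitterRank G r A ≤ splitterRank G r B := by
  refine le_of_forall_le fun t ht ↦ ?_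
  obtain _ | t := t
  · exact Nat.zero_le _
  obtain ⟨c, hc, hA⟩ := add_one_le_splitterRank_iff.1 ht
  refine add_one_le_splitterRank_iff.2 ⟨c, h hc, fun s hs ↦ ?_⟩
  obtain ⟨s', hs', hsub⟩ :=
    exists_erase_subset_erase ⟨c, mem_ball_self hc⟩ (ball_mono (G := G) (r := r) h) s
  exact (hA s' hs').trans (splitterRank_mono hsub)
termination_by B.card
decreasing_by exact (card_erase_lt_of_mem hs).trans_le (card_le_card ball_subset)

lemma splitterRank_insert_le (a : V) :
    splitterRank G r (insert a A) ≤ splitterRank G r A + 1 :=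
  splitterRank_le_add_one_iff.2 fun c hc ↦ by
    obtain ⟨s, hs, hsub⟩ := exists_erase_subset_erase ⟨c, mem_ball_self hc⟩ ball_subset a
    exact ⟨s, hs, splitterRank_mono (hsub.trans (erase_insert_subset a A))⟩

lemma exists_subset_splitterRank_eq {k : ℕ} (hk : k ≤ splitterRank G r A) :
    ∃ B ⊆ A, splitterRank G r B = k := by
  induction A using Finset.induction_on with
  | empty => exact ⟨∅, subset_rfl, by simpa [splitterRank_empty, eq_comm] using hk⟩
  | insert a A _ ih =>
    by_cases hkA : k ≤ splitterRank G r A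
    · obtain ⟨B, hB, hBk⟩ := ih hkA
      exact ⟨B, hB.trans (subset_insert a A), hBk⟩
    · exact ⟨insert a A, subset_rfl, le_antisymm (by
        have := splitterRank_insert_le (G := G) (r := r) (A := A) a; omega) hk⟩

lemma add_one_le_splitterRank_of_cover {k : ℕ} {D : Finset V} {E : V → Finset V} (hc : c ∈ A)
    (hD : k ≤ splitterRank G r D) (hDc : D ⊆ ball G r A c)
    (hE : ∀ s ∈ D, k ≤ splitterRank G r (E s) ∧ E s ⊆ (ball G r A c).erase s) :
    k + 1 ≤ splitterRank G r A := by
  refine add_one_le_splitterRank_iff.2 ⟨c, hc, fun s _ ↦ ?_⟩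
  by_cases hs : s ∈ D
  · exact (hE s hs).1.trans (splitterRank_mono (hE s hs).2)
  · exact hD.trans (splitterRank_mono (subset_erase.2 ⟨hDc, hs⟩))

theorem exists_subset_card_le_add_one_le_splitterRank {k m : ℕ} (hc : c ∈ A)
    (hshrink : ∀ S, k ≤ splitterRank G r S → ∃ D ⊆ S, D.card ≤ m ∧ splitterRank G r D = k)
    (hball : ∀ s ∈ ball G r A c, k ≤ splitterRank G r ((ball G r A c).erase s)) :
    ∃ H ⊆ A, H.card ≤ r * m ^ 2 + r * m + 1 ∧ k + 1 ≤ splitterRank G r H := by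
  set B := ball G r A c
  have hcB : c ∈ B := mem_ball_self hc
  choose! E hEB hEm hEk using fun s (hs : s ∈ B) ↦ hshrink _ (hball s hs)
  set D := E c
  have hDB : D ⊆ B := (hEB c hcB).trans (erase_subset _ _)
  set K := D ∪ D.biUnion E
  have hKB : K ⊆ B :=
    union_subset hDB (biUnion_subset.2 fun s hs ↦ (hEB s (hDB hs)).trans (erase_subset _ _))
  choose! P hPA hPr hP using fun x (hx : x ∈ B) ↦ exists_card_le_forall_mem_ball hx
  set H := insert c (K.biUnion P)
  have hKH : K ⊆ ball G r H c := fun x hx ↦ hP x (hKB hx) H (mem_insert_self c _)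
    ((subset_biUnion_of_mem P hx).trans (subset_insert _ _))
  refine ⟨H, insert_subset hc (biUnion_subset.2 fun x hx ↦ hPA x (hKB hx)),
    card_insert_biUnion_union_biUnion_le c (hEm c hcB) (fun s hs ↦ hEm s (hDB hs))
      (fun x hx ↦ hPr x (hKB hx)),
    add_one_le_splitterRank_of_cover (mem_insert_self c _) (hEk c hcB).ge
      (subset_union_left.trans hKH) fun s hs ↦ ⟨(hEk s (hDB hs)).ge, fun x hx ↦ ?_⟩⟩
  exact mem_erase.2 ⟨(mem_erase.1 (hEB s (hDB hs) hx)).1,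
    hKH (mem_union_right _ (mem_biUnion.2 ⟨s, hs, hx⟩))⟩

end SplitterRank

section Induce

variable {V : Type*} {G : SimpleGraph V} {r : ℕ} (S : Set V)

lemma map_ball_induce (T : Finset S) (c : S) :
    (ball (G.induce S) r T c).map (Function.Embedding.subtype _) =
      ball G r (T.map (Function.Embedding.subtype _)) (Function.Embedding.subtype _ c) := by
  ext x
  constructor
  · intro hx
    obtain ⟨v, hv, rfl⟩ := mem_map.1 hx
    obtain ⟨-, p, hp, hT⟩ := mem_filter.1 hv
    have := mem_ball_of_walk (A := T.map (Function.Embedding.subtype _))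
      (p.map (SimpleGraph.Embedding.induce S).toHom) (r := r) ((p.length_map _).trans_le hp)
      fun y hy ↦ by
        obtain ⟨z, hz, rfl⟩ := List.mem_map.1 (by rwa [SimpleGraph.Walk.support_map] at hy)
        exact mem_map_of_mem _ (hT z hz)
    exact this
  · intro hx
    obtain ⟨hxT, q, hq, hT⟩ := mem_filter.1 hx
    obtain ⟨v, -, rfl⟩ := mem_map.1 hxT
    have hS : ∀ y ∈ q.support, y ∈ S := fun y hy ↦ by
      obtain ⟨z, -, rfl⟩ := mem_map.1 (hT y hy)
      exact z.2
    have := mem_ball_of_walk (A := T) (q.induce S hS) (r := r) (by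
      have h := congrArg SimpleGraph.Walk.length (q.map_induce hS)
      rw [SimpleGraph.Walk.length_map] at h
      exact h.trans_le hq) fun y hy ↦ by
      rw [SimpleGraph.Walk.support_induce, List.mem_attachWith] at hy
      exact (mem_map' _).1 (hT y hy)
    exact mem_map_of_mem _ this

theorem splitterRank_induce [DecidableEq V] (T : Finset S) :
    splitterRank (G.induce S) r T = splitterRank G r (T.map (Function.Embedding.subtype _)) := by
  refine eq_of_forall_le_iff fun t ↦ ?_
  obtain _ | t := t
  · simp
  simp only [add_one_le_splitterRank_iff, mem_map, exists_exists_and_eq_and, ← map_ball_induce,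
    forall_exists_index, and_imp, forall_apply_eq_imp_iff₂, ← map_erase]
  refine exists_congr fun c ↦ and_congr_right fun _ ↦ forall₂_congr fun s hs ↦ ?_
  rw [splitterRank_induce]
termination_by T.card
decreasing_by exact (card_erase_lt_of_mem hs).trans_le (card_le_card ball_subset)

end Induce

universe u

lemma exists_subset_card_le_splitterRank_eq {V : Type u} [DecidableEq V] {G : SimpleGraph V}
    {r k m : ℕ}
    (hyp : ∀ (W : Type u) [Fintype W] [DecidableEq W] [Nonempty W] (G' : SimpleGraph W),
      splitterRank G' r Finset.univ = k →
      ∃ H : Finset W, H.Nonempty ∧ H.card ≤ m ∧ splitterRank G' r H = k)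
    {S : Finset V} (hS : k ≤ splitterRank G r S) :
    ∃ D ⊆ S, D.card ≤ m ∧ splitterRank G r D = k := by
  obtain ⟨F, hFS, hFk⟩ := exists_subset_splitterRank_eq hS
  rcases F.eq_empty_or_nonempty with rfl | hF
  · exact ⟨∅, hFS, by simp, hFk⟩
  have : Nonempty (F : Set V) := hF.to_subtype
  obtain ⟨H, -, hHm, hHk⟩ := hyp (F : Set V) (G.induce F) (by
    rw [splitterRank_induce]
    convert hFk
    ext; simp)
  refine ⟨H.map (Function.Embedding.subtype _), fun x hx ↦ hFS ?_, by simpa using hHm, ?_⟩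
  · obtain ⟨y, -, rfl⟩ := mem_map.1 hx
    exact y.2
  · rwa [← splitterRank_induce]

theorem inductive_step_general {V : Type u} [Fintype V] [DecidableEq V] (G : SimpleGraph V)
    (r k m : ℕ)
    (hyp : ∀ (W : Type u) [Fintype W] [DecidableEq W] [Nonempty W] (G' : SimpleGraph W),
      splitterRank G' r Finset.univ = k →
      ∃ H : Finset W, H.Nonempty ∧ H.card ≤ m ∧ splitterRank G' r H = k)
    (hG : splitterRank G r Finset.univ = k + 1) :
    ∃ H : Finset V, H.card ≤ r * m ^ 2 + r * m + 1 ∧ splitterRank G r H = k + 1 := by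
  obtain ⟨c, -, hc⟩ := add_one_le_splitterRank_iff.1 hG.ge
  obtain ⟨H, -, hHm, hHk⟩ := exists_subset_card_le_add_one_le_splitterRank (mem_univ c)
    (fun _ hS ↦ exists_subset_card_le_splitterRank_eq hyp hS) hc
  exact ⟨H, hHm, le_antisymm (hG ▸ splitterRank_mono (subset_univ H)) hHk⟩

/-- Inductive step: if every nonempty graph of `r`-splitter rank `k` contains a nonempty induced
subgraph of rank `k` with at most `m` vertices, then every graph of rank `k+1` contains an
induced subgraph of rank `k+1` with at most `r·m² + r·m + 1` vertices. -/
theorem inductive_step {V : Type u} [Fintype V] [DecidableEq V] (G : SimpleGraph V)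
    (r k m : ℕ) (hr : 0 < r) (hk : 0 < k) (hm : 0 < m)
    (hyp : ∀ (W : Type u) [Fintype W] [DecidableEq W] [Nonempty W] (G' : SimpleGraph W),
      splitterRank G' r Finset.univ = k →
      ∃ H : Finset W, H.Nonempty ∧ H.card ≤ m ∧ splitterRank G' r H = k)
    (hG : splitterRank G r Finset.univ = k + 1) :
    ∃ H : Finset V, H.card ≤ r * m ^ 2 + r * m + 1 ∧ splitterRank G r H = k + 1 :=
  inductive_step_general G r k m hyp hG
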